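/- Let u*, u', d' be positive reals with u* > u'. Then there exists δ > 0 (namely δ = d'·u'/u*) such that for all d* with 0 < d* < δ, the multiplicative selector strictly prefers the distractor (d*·u* < d'·u'), while the additive selector with any weight w ∈ (0, (u*-u')/((u*-u')+(d'-d*))) strictly prefers the target, assuming d' > d*. -/

import Mathlib

/-!
Once `d* < d'u'/u*`, the product `d*·u*` drops below `d'·u'`. The additive comparison, in
contrast, is linear in `w`: the target wins exactly when `w((u* - u') + (d' - d*)) < u* - u'`,
a condition on the weight that does not degrade as `d*` tends to `0`.
-/

def multiplicativeScore (d u : ℝ) : ℝ := d * u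

def additiveScore (w d u : ℝ) : ℝ := w * d + (1 - w) * u

theorem multiplicativeScore_lt_of_lt_div {d u d' u' : ℝ} (hu : 0 < u) (hd : d < d' * u' / u) :
    multiplicativeScore d u < multiplicativeScore d' u' :=
  (lt_div_iff₀ hu).mp hd

theorem additiveScore_lt_additiveScore_iff {w d u d' u' : ℝ} :
    additiveScore w d' u' < additiveScore w d u ↔ w * ((u - u') + (d' - d)) < u - u' := by
  unfold additiveScore
  constructor <;> intro h <;> linarith

theorem additiveScore_lt_of_lt_div {w d u d' u' : ℝ} (hgap : 0 < (u - u') + (d' - d))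
    (hw : w < (u - u') / ((u - u') + (d' - d))) :
    additiveScore w d' u' < additiveScore w d u :=
  additiveScore_lt_additiveScore_iff.mpr ((lt_div_iff₀ hgap).mp hw)

theorem stmt_2_general (us u' d' : ℝ) (hu' : 0 < u') (hd' : 0 < d')
    (hu : u' < us) :
    ∃ δ : ℝ, 0 < δ ∧ δ = d' * u' / us ∧
      ∀ ds : ℝ, 0 < ds → ds < δ → ds < d' →
        ds * us < d' * u' ∧
        ∀ w : ℝ, 0 < w → w < (us - u') / ((us - u') + (d' - ds)) →
          w * ds + (1 - w) * us > w * d' + (1 - w) * u' := by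
  have hus : 0 < us := hu'.trans hu
  refine ⟨d' * u' / us, by positivity, rfl, fun ds _ hδ hd => ⟨?_, fun w _ hw => ?_⟩⟩
  · exact multiplicativeScore_lt_of_lt_div hus hδ
  · exact additiveScore_lt_of_lt_div (by linarith) hw

theorem stmt_2 (us u' d' : ℝ) (hus : 0 < us) (hu' : 0 < u') (hd' : 0 < d')
    (hu : u' < us) :
    ∃ δ : ℝ, 0 < δ ∧ δ = d' * u' / us ∧
      ∀ ds : ℝ, 0 < ds → ds < δ → ds < d' →
        ds * us < d' * u' ∧
        ∀ w : ℝ, 0 < w → w < (us - u') / ((us - u') + (d' - ds)) →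
          w * ds + (1 - w) * us > w * d' + (1 - w) * u' :=
  stmt_2_general us u' d' hu' hd' hu
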